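/- Let X ∈ ℝ^{n×k}, Y ∈ ℝ^{n×ℓ} with k ≤ ℓ, and suppose X, Y, and Y^T X all have full column rank. Let X = Q_X R_X be a thin QR factorization of X (Q_X ∈ ℝ^{n×k} with orthonormal columns, R_X ∈ ℝ^{k×k} upper triangular). Then for the spectral norm, ‖X (Y^T X)^† Y^T‖₂ = ‖(Y^T Q_X)^† Y^T‖₂. -/

import Mathlib

/-! Since `Yᵀ X = (Yᵀ Q_X) R_X` has full column rank, `(Yᵀ X)†` is a left inverse of it, so `R_X`
is invertible and `R_X (Yᵀ X)†` is a left inverse of `Yᵀ Q_X` with symmetric product; by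
uniqueness it is `(Yᵀ Q_X)†`. Hence `X (Yᵀ X)† Yᵀ = Q_X (Yᵀ Q_X)† Yᵀ`, and the isometry `Q_X`
does not change the spectral norm. -/

open Matrix

noncomputable section

/-- `B` is the Moore–Penrose pseudoinverse of `A` (the four Penrose conditions). -/
def IsMP {m n : ℕ} (A : Matrix (Fin m) (Fin n) ℝ) (B : Matrix (Fin n) (Fin m) ℝ) : Prop :=
  A * B * A = A ∧ B * A * B = B ∧ (A * B)ᵀ = A * B ∧ (B * A)ᵀ = B * A

/-- Euclidean norm of a vector. -/
def vecEnorm {a : ℕ} (v : Fin a → ℝ) : ℝ := Real.sqrt (∑ i, (v i) ^ 2)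

/-- Spectral (ℓ2 operator) norm of a matrix. -/
def spec {a b : ℕ} (M : Matrix (Fin a) (Fin b) ℝ) : ℝ :=
  sSup {r | ∃ x : Fin b → ℝ, vecEnorm x = 1 ∧ r = vecEnorm (M.mulVec x)}

/-- Selection matrix whose columns are the columns of the identity indexed by `g`. -/
def sel {a b : ℕ} (g : Fin a → Fin b) : Matrix (Fin b) (Fin a) ℝ :=
  fun i j => if g j = i then 1 else 0

theorem Matrix.mulVec_injective_of_rank_eq_card {m n K : Type*} [Fintype m] [Fintype n] [Field K]
    {A : Matrix m n K} (h : A.rank = Fintype.card n) : Function.Injective A.mulVec :=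
  mulVec_injective_iff.2 <| linearIndependent_iff_card_eq_finrank_span.2 <| by
    rw [← h, rank_eq_finrank_span_cols]; rfl

theorem Matrix.mul_left_cancel_of_rank_eq_card {m n p K : Type*} [Fintype m] [Fintype n] [Field K]
    {A : Matrix m n K} (h : A.rank = Fintype.card n) {M N : Matrix n p K}
    (hMN : A * M = A * N) : M = N := by
  ext i j
  have hcol : A *ᵥ (fun k => M k j) = A *ᵥ (fun k => N k j) :=
    funext fun i => congrFun (congrFun hMN i) j
  exact congrFun (mulVec_injective_of_rank_eq_card h hcol) i

namespace IsMP

variable {m n : ℕ} {A : Matrix (Fin m) (Fin n) ℝ} {B C : Matrix (Fin n) (Fin m) ℝ}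

theorem transpose (hB : IsMP A B) : IsMP Aᵀ Bᵀ := by
  obtain ⟨h1, h2, h3, h4⟩ := hB
  refine ⟨?_, ?_, ?_, ?_⟩
  · rw [← transpose_mul, ← transpose_mul, ← Matrix.mul_assoc, h1]
  · rw [← transpose_mul, ← transpose_mul, ← Matrix.mul_assoc, h2]
  · rw [← transpose_mul, transpose_transpose, h4]
  · rw [← transpose_mul, transpose_transpose, h3]

theorem mul_eq_mul (hB : IsMP A B) (hC : IsMP A C) : A * B = A * C := by
  obtain ⟨b1, -, b3, -⟩ := hB
  obtain ⟨c1, -, c3, -⟩ := hC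
  calc A * B = (A * C * A * B)ᵀ := by rw [c1, b3]
    _ = (A * B)ᵀ * (A * C)ᵀ := by rw [← transpose_mul, Matrix.mul_assoc (A * C)]
    _ = A * C := by rw [b3, c3, ← Matrix.mul_assoc, b1]

theorem unique (hB : IsMP A B) (hC : IsMP A C) : B = C := by
  have hBA : B * A = C * A := by
    simpa using congrArg Matrix.transpose (hB.transpose.mul_eq_mul hC.transpose)
  calc B = B * A * B := hB.2.1.symm
    _ = C * A * C := by rw [Matrix.mul_assoc, hB.mul_eq_mul hC, ← Matrix.mul_assoc, hBA]
    _ = C := hC.2.1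

theorem mul_self_eq_one_of_rank_eq (hB : IsMP A B) (hA : A.rank = n) : B * A = 1 :=
  mul_left_cancel_of_rank_eq_card (by rwa [Fintype.card_fin]) <| by
    rw [Matrix.mul_one, ← Matrix.mul_assoc, hB.1]

theorem of_mul_eq_one (hBA : B * A = 1) (hAB : (A * B)ᵀ = A * B) : IsMP A B := by
  refine ⟨?_, ?_, hAB, ?_⟩
  · rw [Matrix.mul_assoc, hBA, Matrix.mul_one]
  · rw [hBA, Matrix.one_mul]
  · rw [hBA, transpose_one]

/-- `G * A` is a left, hence two-sided, inverse of the square matrix `R`. -/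
theorem of_mul_right {k : ℕ} {R : Matrix (Fin n) (Fin n) ℝ} {G : Matrix (Fin n) (Fin k) ℝ}
    {A : Matrix (Fin k) (Fin n) ℝ} (hG : IsMP (A * R) G) (hAR : (A * R).rank = n) :
    IsMP A (R * G) := by
  have hGAR : G * A * R = 1 := by
    rw [Matrix.mul_assoc, hG.mul_self_eq_one_of_rank_eq hAR]
  refine of_mul_eq_one ?_ ?_
  · rw [Matrix.mul_assoc, mul_eq_one_comm.1 hGAR]
  · rw [← Matrix.mul_assoc, hG.2.2.1]

end IsMP

theorem vecEnorm_mulVec_of_transpose_mul_self_eq_one {m n : ℕ} {Q : Matrix (Fin m) (Fin n) ℝ}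
    (hQ : Qᵀ * Q = 1) (v : Fin n → ℝ) : vecEnorm (Q *ᵥ v) = vecEnorm v := by
  have hdot : Q *ᵥ v ⬝ᵥ Q *ᵥ v = v ⬝ᵥ v := by
    rw [dotProduct_mulVec, ← mulVec_transpose, mulVec_mulVec, hQ, one_mulVec]
  simp only [vecEnorm, sq]
  exact congrArg Real.sqrt hdot

theorem spec_mul_of_transpose_mul_self_eq_one {m n p : ℕ} {Q : Matrix (Fin m) (Fin n) ℝ}
    (hQ : Qᵀ * Q = 1) (M : Matrix (Fin n) (Fin p) ℝ) : spec (Q * M) = spec M := by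
  simp only [spec, ← mulVec_mulVec, vecEnorm_mulVec_of_transpose_mul_self_eq_one hQ]

theorem oblique_projector_norm_general {n k l : ℕ}
    (X QX : Matrix (Fin n) (Fin k) ℝ) (RX : Matrix (Fin k) (Fin k) ℝ)
    (Y : Matrix (Fin n) (Fin l) ℝ)
    (hQR : X = QX * RX) (hQ : QXᵀ * QX = 1)
    (hYX : (Yᵀ * X).rank = k)
    (G : Matrix (Fin k) (Fin l) ℝ) (hG : IsMP (Yᵀ * X) G)
    (H : Matrix (Fin k) (Fin l) ℝ) (hH : IsMP (Yᵀ * QX) H) :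
    spec (X * G * Yᵀ) = spec (H * Yᵀ) := by
  rw [hQR, ← Matrix.mul_assoc] at hG hYX
  have hHRG : H = RX * G := hH.unique (hG.of_mul_right hYX)
  rw [hQR, hHRG, Matrix.mul_assoc QX, Matrix.mul_assoc QX,
    spec_mul_of_transpose_mul_self_eq_one hQ, Matrix.mul_assoc]

/-- with a thin QR factorization `X = Q_X R_X`, the spectral norm of the
oblique projector simplifies: `‖X (Yᵀ X)† Yᵀ‖₂ = ‖(Yᵀ Q_X)† Yᵀ‖₂`. -/
theorem oblique_projector_norm {n k l : ℕ} (hkl : k ≤ l)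
    (X QX : Matrix (Fin n) (Fin k) ℝ) (RX : Matrix (Fin k) (Fin k) ℝ)
    (Y : Matrix (Fin n) (Fin l) ℝ)
    (hQR : X = QX * RX) (hQ : QXᵀ * QX = 1)
    (hRtri : ∀ i j : Fin k, (j : ℕ) < (i : ℕ) → RX i j = 0)
    (hX : X.rank = k) (hY : Y.rank = l) (hYX : (Yᵀ * X).rank = k)
    (G : Matrix (Fin k) (Fin l) ℝ) (hG : IsMP (Yᵀ * X) G)
    (H : Matrix (Fin k) (Fin l) ℝ) (hH : IsMP (Yᵀ * QX) H) :
    spec (X * G * Yᵀ) = spec (H * Yᵀ) :=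
  oblique_projector_norm_general X QX RX Y hQR hQ hYX G hG H hH
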